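/- arXiv:1911.02656 — 3 statements merged into one kernel-verified Lean document; each statement's English description precedes it below -/
import Mathlib

section
/- Let d be a positive natural number and let C be an invertible d×d real matrix such that for all nonzero vectors v, w in ℝ^d, the cosine similarity of Cv and Cw equals the cosine similarity of v and w. Then there exist a nonzero real number c and a d×d real orthogonal matrix Q such that C = cQ. In other words, the invertible matrices leaving cosine similarity invariant are exactly the elements of cO(d) = {cQ : c ∈ ℝ, c ≠ 0, Q orthogonal}. -/
open Matrix

/-- The cosine similarity of two vectors in Euclidean space:
`⟪v, w⟫ / (‖v‖ * ‖w‖)`. -/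
noncomputable def cosineSim {d : ℕ} (v w : EuclideanSpace ℝ (Fin d)) : ℝ :=
  (inner ℝ v w : ℝ) / (‖v‖ * ‖w‖)

/-- An invertible matrix that leaves cosine similarity invariant is a nonzero scalar
multiple of an orthogonal matrix, i.e. an element of `cO(d)`. -/
theorem cosineSim_invariant_iff_scaled_orthogonal
    (d : ℕ) (hd : 0 < d) (C : Matrix (Fin d) (Fin d) ℝ) (hC : IsUnit C)
    (h : ∀ v w : EuclideanSpace ℝ (Fin d), v ≠ 0 → w ≠ 0 →
      cosineSim (Matrix.toEuclideanLin C v) (Matrix.toEuclideanLin C w) = cosineSim v w) :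
    ∃ (c : ℝ) (Q : Matrix (Fin d) (Fin d) ℝ), c ≠ 0 ∧ Qᵀ * Q = 1 ∧ Q * Qᵀ = 1 ∧ C = c • Q := by
  set T := Matrix.toEuclideanLin C with hT
  have hinj : Function.Injective C.mulVec := mulVec_injective_iff_isUnit.2 hC
  have hTne : ∀ v : EuclideanSpace ℝ (Fin d), v ≠ 0 → T v ≠ 0 := by
    intro v hv hv0
    apply hv
    have : C.mulVec ((WithLp.equiv 2 _) v) = C.mulVec 0 := by
      simpa [Matrix.mulVec_zero, hT, toEuclideanLin_apply] using congrArg (WithLp.equiv 2 _) hv0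
    have := hinj this
    simpa using congrArg (WithLp.equiv 2 (Fin d → ℝ)).symm this
  have key : ∀ v w : EuclideanSpace ℝ (Fin d), v ≠ 0 → w ≠ 0 →
      (inner ℝ v w : ℝ) = 0 → (inner ℝ (T v) (T w) : ℝ) = 0 := by
    intro v w hv hw hvw
    have := h v w hv hw
    rw [cosineSim, cosineSim, hvw, zero_div, div_eq_zero_iff] at this
    rcases this with h1 | h1
    · exact h1
    · exact absurd (mul_eq_zero.1 h1)
        (by push_neg; exact ⟨norm_ne_zero_iff.2 (hTne v hv), norm_ne_zero_iff.2 (hTne w hw)⟩)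
  set e : Fin d → EuclideanSpace ℝ (Fin d) := fun i => EuclideanSpace.single i 1 with he
  have hG : ∀ i j, (inner ℝ (T (e i)) (T (e j)) : ℝ) = (Cᵀ * C) i j := by
    intro i j
    rw [PiLp.inner_apply, Matrix.mul_apply]
    apply Finset.sum_congr rfl
    intro k _
    have hcol : ∀ (l : Fin d), (T (e l)) k = C k l := by
      intro l
      simp [hT, he, toEuclideanLin_apply, mulVec_single]
    simp [hcol, transpose_apply, mul_comm]
  have hene : ∀ i, e i ≠ 0 := by
    intro i h0
    have := congrArg (fun x : EuclideanSpace ℝ (Fin d) => x i) h0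
    simp [he, EuclideanSpace.single_apply] at this
  -- off-diagonal entries vanish
  have hoff : ∀ i j, i ≠ j → (Cᵀ * C) i j = 0 := by
    intro i j hij
    rw [← hG]
    apply key _ _ (hene i) (hene j)
    simp [he, EuclideanSpace.inner_single_left, EuclideanSpace.single_apply, hij, Ne.symm hij]
  -- diagonal entries are equal
  have hdiag : ∀ i j, (Cᵀ * C) i i = (Cᵀ * C) j j := by
    intro i j
    rcases eq_or_ne i j with rfl | hij
    · rfl
    · have hvne : e i + e j ≠ 0 := by
        intro h0
        have := congrArg (fun x : EuclideanSpace ℝ (Fin d) => x i) h0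
        simp [he, EuclideanSpace.single_apply, hij] at this
      have hwne : e i - e j ≠ 0 := by
        intro h0
        have := congrArg (fun x : EuclideanSpace ℝ (Fin d) => x i) h0
        simp [he, EuclideanSpace.single_apply, hij] at this
      have hvw : (inner ℝ (e i + e j) (e i - e j) : ℝ) = 0 := by
        simp [he, inner_add_left, inner_sub_right, EuclideanSpace.inner_single_left,
          EuclideanSpace.single_apply, hij, hij.symm, real_inner_comm]
      have h0 := key _ _ hvne hwne hvw
      rw [map_add, map_sub, inner_add_left, inner_sub_right, inner_sub_right,
        hG, hG, hG, hG, hoff i j hij, hoff j i hij.symm] at h0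
      linarith
  set i0 : Fin d := ⟨0, hd⟩ with hi0
  set r2 : ℝ := (Cᵀ * C) i0 i0 with hr2
  have hr2pos : 0 < r2 := by
    have : r2 = ‖T (e i0)‖ ^ 2 := by
      rw [hr2, ← hG, real_inner_self_eq_norm_sq]
    rw [this]
    exact pow_pos (norm_pos_iff.2 (hTne _ (hene i0))) 2
  have hCtC : Cᵀ * C = r2 • (1 : Matrix (Fin d) (Fin d) ℝ) := by
    ext i j
    rcases eq_or_ne i j with rfl | hij
    · simp [hdiag i i0, ← hr2]
    · simp [hoff i j hij, Matrix.one_apply_ne hij, hij]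
  set c : ℝ := Real.sqrt r2 with hc
  have hcpos : 0 < c := Real.sqrt_pos.2 hr2pos
  have hc2 : c * c = r2 := Real.mul_self_sqrt hr2pos.le
  refine ⟨c, c⁻¹ • C, hcpos.ne', ?_, ?_, ?_⟩
  · rw [transpose_smul, Matrix.smul_mul, Matrix.mul_smul, hCtC, smul_smul, smul_smul]
    rw [show c⁻¹ * c⁻¹ * r2 = 1 by rw [← hc2]; field_simp]
    simp
  · rw [mul_eq_one_comm]
    rw [transpose_smul, Matrix.smul_mul, Matrix.mul_smul, hCtC, smul_smul, smul_smul]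
    rw [show c⁻¹ * c⁻¹ * r2 = 1 by rw [← hc2]; field_simp]
    simp
  · rw [smul_smul, mul_inv_cancel₀ hcpos.ne', one_smul]
end

section
/- (Proposition 1) Let d be a positive natural number, let Λ be a d×d real diagonal matrix with strictly positive diagonal entries λ₁, …, λ_d, and let α be a nonzero real number. Let Λ^α denote the diagonal matrix with diagonal entries λ₁^α, …, λ_d^α. If for all nonzero vectors v, w in ℝ^d the cosine similarity of Λ^α v and Λ^α w equals the cosine similarity of v and w, then Λ is a scalar multiple of the identity, i.e. there exists c > 0 with Λ = c·I. -/
open Matrix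

theorem cosineSim_eq_zero_iff {d : ℕ} (v w : EuclideanSpace ℝ (Fin d)) :
    cosineSim v w = 0 ↔ inner ℝ v w = 0 := by
  rcases eq_or_ne v 0 with rfl | hv
  · simp [cosineSim]
  rcases eq_or_ne w 0 with rfl | hw
  · simp [cosineSim]
  simp [cosineSim, hv, hw]

theorem norm_map_eq_of_preserves_orthogonal {E F : Type*}
    [NormedAddCommGroup E] [InnerProductSpace ℝ E] [NormedAddCommGroup F] [InnerProductSpace ℝ F]
    (T : E →ₗ[ℝ] F)
    (hT : ∀ v w, v ≠ 0 → w ≠ 0 → inner ℝ v w = 0 → inner ℝ (T v) (T w) = 0)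
    {x y : E} (hx : x ≠ 0) (hxy : inner ℝ x y = 0) (hnorm : ‖x‖ = ‖y‖) :
    ‖T x‖ = ‖T y‖ := by
  have hx_pos : 0 < ‖x‖ := norm_pos_iff.mpr hx
  have hadd : x + y ≠ 0 := fun h0 => by
    have := norm_add_sq_eq_norm_sq_add_norm_sq_real hxy
    rw [h0, norm_zero] at this
    nlinarith
  have hsub : x - y ≠ 0 := fun h0 => by
    have := norm_sub_sq_eq_norm_sq_add_norm_sq_real hxy
    rw [h0, norm_zero] at this
    nlinarith
  have horth := hT _ _ hadd hsub ((real_inner_add_sub_eq_zero_iff x y).mpr hnorm)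
  rwa [map_add, map_sub, real_inner_add_sub_eq_zero_iff] at horth

section Diagonal

variable {ι : Type*} [DecidableEq ι]

theorem toEuclideanLin_diagonal_single [Fintype ι] {𝕜 : Type*} [RCLike 𝕜]
    (μ : ι → 𝕜) (i : ι) (a : 𝕜) :
    toEuclideanLin (diagonal μ) (EuclideanSpace.single i a) =
      EuclideanSpace.single i (μ i * a) := by
  ext k
  by_cases hk : k = i <;> simp [mulVec_diagonal, hk]

theorem abs_eq_of_diagonal_preserves_orthogonal [Fintype ι] (μ : ι → ℝ)
    (hμ : ∀ v w : EuclideanSpace ℝ ι, v ≠ 0 → w ≠ 0 → inner ℝ v w = 0 →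
      inner ℝ (toEuclideanLin (diagonal μ) v) (toEuclideanLin (diagonal μ) w) = 0)
    (i j : ι) : |μ i| = |μ j| := by
  rcases eq_or_ne i j with rfl | hij
  · rfl
  have h := norm_map_eq_of_preserves_orthogonal _ hμ
    (x := EuclideanSpace.single i 1) (y := EuclideanSpace.single j 1)
    (by simp) (by simp [EuclideanSpace.inner_single_left, hij]) (by simp)
  simpa [toEuclideanLin_diagonal_single] using h

theorem exists_pos_diagonal_eq_smul_one (lam : ι → ℝ) (hlam : ∀ i, 0 < lam i)
    (hconst : ∀ i j, lam i = lam j) :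
    ∃ c : ℝ, 0 < c ∧ diagonal lam = c • (1 : Matrix ι ι ℝ) := by
  rcases isEmpty_or_nonempty ι with _ | hne
  · exact ⟨1, one_pos, Matrix.ext fun i => isEmptyElim i⟩
  obtain ⟨i₀⟩ := hne
  refine ⟨lam i₀, hlam i₀, ?_⟩
  rw [smul_one_eq_diagonal]
  exact congrArg diagonal (funext fun i => hconst i i₀)

end Diagonal

theorem diagonal_rpow_cosineSim_invariant_imp_scalar_general
    (d : ℕ) (lam : Fin d → ℝ) (hlam : ∀ i, 0 < lam i)
    (α : ℝ) (hα : α ≠ 0)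
    (h : ∀ v w : EuclideanSpace ℝ (Fin d), v ≠ 0 → w ≠ 0 →
      cosineSim (Matrix.toEuclideanLin (Matrix.diagonal fun i => lam i ^ α) v)
          (Matrix.toEuclideanLin (Matrix.diagonal fun i => lam i ^ α) w) =
        cosineSim v w) :
    ∃ c : ℝ, 0 < c ∧ Matrix.diagonal lam = c • (1 : Matrix (Fin d) (Fin d) ℝ) := by
  have habs := abs_eq_of_diagonal_preserves_orthogonal _ fun v w hv hw hvw => by
    rw [← cosineSim_eq_zero_iff, h v w hv hw, cosineSim_eq_zero_iff, hvw]
  refine exists_pos_diagonal_eq_smul_one lam hlam fun i j => ?_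
  have hrpow : lam i ^ α = lam j ^ α := by
    simpa [abs_of_pos (Real.rpow_pos_of_pos (hlam _) α)] using habs i j
  exact (Real.rpow_left_inj (hlam i).le (hlam j).le hα).mp hrpow

/-- Proposition 1: if `Λ^α` (with `Λ = diagonal λ`, `λᵢ > 0`, `α ≠ 0`) leaves cosine
similarity invariant, then `Λ` is a scalar multiple of the identity. -/
theorem diagonal_rpow_cosineSim_invariant_imp_scalar
    (d : ℕ) (hd : 0 < d) (lam : Fin d → ℝ) (hlam : ∀ i, 0 < lam i)
    (α : ℝ) (hα : α ≠ 0)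
    (h : ∀ v w : EuclideanSpace ℝ (Fin d), v ≠ 0 → w ≠ 0 →
      cosineSim (Matrix.toEuclideanLin (Matrix.diagonal fun i => lam i ^ α) v)
          (Matrix.toEuclideanLin (Matrix.diagonal fun i => lam i ^ α) w) =
        cosineSim v w) :
    ∃ c : ℝ, 0 < c ∧ Matrix.diagonal lam = c • (1 : Matrix (Fin d) (Fin d) ℝ) :=
  diagonal_rpow_cosineSim_invariant_imp_scalar_general d lam hlam α hα h
end

section
/- (Monomial-matrix lemma from the proof of Corollary 2) Let d be a positive natural number, let Q be a d×d real orthogonal matrix, and let D be a d×d real diagonal matrix whose diagonal entries are pairwise distinct. If QᵀDQ is a diagonal matrix, then Q is a signed permutation matrix: there is a permutation σ of {1,…,d} such that Q i j = 0 whenever j ≠ σ(i), and Q i σ(i) ∈ {1, −1} for every i. -/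
/-!
Put `E = QᵀDQ`. Since `QQᵀ = 1` we have `QE = DQ`, and comparing the `(i, j)` entries of two
products with a diagonal factor gives `Q i j * E j j = D i i * Q i j`. Hence a nonzero entry
`Q i j` forces `E j j = D i i`, and as the `D i i` are distinct, every column of `Q` has at most
one nonzero entry. Every row of `Q` is nonzero because `QQᵀ = 1`, so choosing a nonzero entry in
each row gives an injective, hence bijective, map of rows to columns, off which `Q` vanishes.
A row with a single nonzero entry `q` has squared norm `q * q = 1`.
-/

open Matrix

namespace Matrix

variable {n R : Type*} [Fintype n]

theorem exists_perm_support_subset_of_rows_ne_zero [Zero R] {M : Matrix n n R}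
    (hrow : ∀ i, ∃ j, M i j ≠ 0) (hcol : ∀ i i' j, M i j ≠ 0 → M i' j ≠ 0 → i = i') :
    ∃ σ : Equiv.Perm n, ∀ i j, j ≠ σ i → M i j = 0 := by
  choose τ hτ using hrow
  have hinj : Function.Injective τ := fun i i' h =>
    hcol i i' (τ i) (hτ i) (h ▸ hτ i')
  let σ := Equiv.ofBijective τ (Finite.injective_iff_bijective.mp hinj)
  refine ⟨σ, fun i j hj => ?_⟩
  by_contra hij
  have hsymm : M (σ.symm j) j ≠ 0 := by
    have := hτ (σ.symm j)
    rwa [show τ (σ.symm j) = j from σ.apply_symm_apply j] at this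
  exact hj (by rw [hcol i (σ.symm j) j hij hsymm, σ.apply_symm_apply])

variable [DecidableEq n]

theorem IsDiag.eq_of_mul_eq_mul [CommRing R] [NoZeroDivisors R] {Q D E : Matrix n n R}
    (hD : D.IsDiag) (hE : E.IsDiag) (hQ : Q * E = D * Q) {i j : n} (hij : Q i j ≠ 0) :
    E j j = D i i := by
  rw [← hE.diagonal_diag, ← hD.diagonal_diag] at hQ
  have hentry := congrFun (congrFun hQ i) j
  rw [mul_diagonal, diagonal_mul, mul_comm (D.diag i)] at hentry
  exact mul_left_cancel₀ hij hentry

theorem exists_ne_zero_of_mul_transpose_eq_one [Semiring R] [Nontrivial R] {Q : Matrix n n R}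
    (hQ : Q * Qᵀ = 1) (i : n) : ∃ j, Q i j ≠ 0 := by
  by_contra! hrow
  have : (Q * Qᵀ) i i = 0 := by
    rw [mul_apply]
    exact Finset.sum_eq_zero fun j _ => by rw [hrow j, zero_mul]
  rw [hQ, one_apply_eq] at this
  exact one_ne_zero this

theorem eq_one_or_eq_neg_one_of_mul_transpose_eq_one [Ring R] [NoZeroDivisors R]
    {Q : Matrix n n R} (hQ : Q * Qᵀ = 1) {i k : n} (hrow : ∀ j, j ≠ k → Q i j = 0) :
    Q i k = 1 ∨ Q i k = -1 := by
  have hnorm : (Q * Qᵀ) i i = Q i k * Q i k := by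
    rw [mul_apply]
    exact Finset.sum_eq_single k (fun j _ hj => by rw [hrow j hj, zero_mul])
      (fun hk => absurd (Finset.mem_univ k) hk)
  rw [hQ, one_apply_eq] at hnorm
  exact mul_self_eq_one_iff.mp hnorm.symm

end Matrix

theorem orthogonal_diagonalizing_is_signed_permutation_general
    (d : ℕ)
    (Q : Matrix (Fin d) (Fin d) ℝ) (hQ' : Q * Qᵀ = 1)
    (D : Matrix (Fin d) (Fin d) ℝ) (hD : D.IsDiag)
    (hDdistinct : ∀ i j : Fin d, i ≠ j → D i i ≠ D j j)
    (h : (Qᵀ * D * Q).IsDiag) :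
    ∃ σ : Equiv.Perm (Fin d),
      (∀ i j : Fin d, j ≠ σ i → Q i j = 0) ∧
      (∀ i : Fin d, Q i (σ i) = 1 ∨ Q i (σ i) = -1) := by
  have hcomm : Q * (Qᵀ * D * Q) = D * Q := by
    rw [← Matrix.mul_assoc, ← Matrix.mul_assoc, hQ', Matrix.one_mul]
  have hcol : ∀ i i' j, Q i j ≠ 0 → Q i' j ≠ 0 → i = i' := fun i i' j hi hi' => by
    by_contra hne
    exact hDdistinct i i' hne <|
      (hD.eq_of_mul_eq_mul h hcomm hi).symm.trans (hD.eq_of_mul_eq_mul h hcomm hi')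
  obtain ⟨σ, hσ⟩ :=
    exists_perm_support_subset_of_rows_ne_zero (exists_ne_zero_of_mul_transpose_eq_one hQ') hcol
  exact ⟨σ, hσ, fun i => eq_one_or_eq_neg_one_of_mul_transpose_eq_one hQ' (hσ i)⟩

/-- Monomial-matrix lemma (from the proof of Corollary 2): if `Q` is orthogonal, `D`
is diagonal with pairwise distinct diagonal entries, and `QᵀDQ` is diagonal, then `Q`
is a signed permutation matrix. -/
theorem orthogonal_diagonalizing_is_signed_permutation
    (d : ℕ) (hd : 0 < d)
    (Q : Matrix (Fin d) (Fin d) ℝ) (hQ : Qᵀ * Q = 1) (hQ' : Q * Qᵀ = 1)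
    (D : Matrix (Fin d) (Fin d) ℝ) (hD : D.IsDiag)
    (hDdistinct : ∀ i j : Fin d, i ≠ j → D i i ≠ D j j)
    (h : (Qᵀ * D * Q).IsDiag) :
    ∃ σ : Equiv.Perm (Fin d),
      (∀ i j : Fin d, j ≠ σ i → Q i j = 0) ∧
      (∀ i : Fin d, Q i (σ i) = 1 ∨ Q i (σ i) = -1) :=
  orthogonal_diagonalizing_is_signed_permutation_general d Q hQ' D hD hDdistinct h
end
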